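/- arXiv:2602.21579 — 2 statements merged into one kernel-verified Lean document; each statement's English description precedes it below -/
import Mathlib

section
/- Let (Y_n)_{n≥1} be a sequence of real-valued random variables on a probability space (Ω, 𝒜, P) satisfying the uniform continuity in probability (u.c.i.p.) condition and converging in distribution to the normal law N(0, σ²) with σ > 0. Let (n_k)_{k≥1} be positive integers with n_k → ∞, and let (N_k)_{k≥1} be measurable ℕ-valued random variables such that N_k / n_k → 1 in probability as k → ∞. Then the randomly indexed sequence Y_{N_k} converges in distribution to N(0, σ²) as k → ∞. -/
/-!
Because of u.c.i.p., on the event `|N_k / n_k - 1| < ν` the random index `N_k` lies in the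
window `|n' - n_k| ≤ ν n_k`, where `Y` moves by less than `ε` except on a set of probability less
than `ε`. Hence `Y_{N_k} - Y_{n_k} → 0` in probability, and since `Y_{n_k}` converges in
distribution to `N(0, σ²)`, so does `Y_{N_k}` by Slutsky's theorem.
-/

open MeasureTheory ProbabilityTheory Filter Topology

/-- A sequence `Y` of real-valued random variables satisfies the
*uniform continuity in probability* (u.c.i.p.) condition. -/
def UCIP {Ω : Type*} [MeasurableSpace Ω] (P : Measure Ω) (Y : ℕ → Ω → ℝ) : Prop :=
  ∀ ε : ℝ, 0 < ε → ∃ ν : ℝ, ν ∈ Set.Ioo (0 : ℝ) 1 ∧ ∃ n₀ : ℕ, ∀ n : ℕ, n₀ ≤ n →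
    P {x | ∃ n' : ℕ, |(n' : ℝ) - (n : ℝ)| ≤ ν * n ∧ ε ≤ |Y n' x - Y n x|} <
      ENNReal.ofReal ε

open scoped BoundedContinuousFunction

theorem MeasureTheory.tendstoInDistribution_iff_forall_integral_tendsto {ι E Ω' : Type*}
    {Ω : ι → Type*} {m : ∀ i, MeasurableSpace (Ω i)} {μ : (i : ι) → Measure (Ω i)}
    [∀ i, IsProbabilityMeasure (μ i)] {m' : MeasurableSpace Ω'} {μ' : Measure Ω'}
    [IsProbabilityMeasure μ'] [TopologicalSpace E] [MeasurableSpace E] [OpensMeasurableSpace E]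
    {X : (i : ι) → Ω i → E} {Z : Ω' → E} {l : Filter ι}
    (hX : ∀ i, AEMeasurable (X i) (μ i)) (hZ : AEMeasurable Z μ') :
    TendstoInDistribution X l Z μ μ' ↔
      ∀ f : E →ᵇ ℝ, Tendsto (fun i ↦ ∫ ω, f (X i ω) ∂μ i) l (𝓝 (∫ ω, f (Z ω) ∂μ')) := by
  have hmap (f : E →ᵇ ℝ) : (∀ i, ∫ y, f y ∂(μ i).map (X i) = ∫ ω, f (X i ω) ∂μ i) ∧
      ∫ y, f y ∂μ'.map Z = ∫ ω, f (Z ω) ∂μ' :=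
    ⟨fun i ↦ integral_map (hX i) f.continuous.aestronglyMeasurable,
      integral_map hZ f.continuous.aestronglyMeasurable⟩
  refine ⟨fun h f ↦ ?_, fun h ↦ ⟨hX, hZ, ?_⟩⟩
  · have := ProbabilityMeasure.tendsto_iff_forall_integral_tendsto.mp h.tendsto f
    simpa only [ProbabilityMeasure.coe_mk, (hmap f).1, (hmap f).2] using this
  · refine ProbabilityMeasure.tendsto_iff_forall_integral_tendsto.mpr fun f ↦ ?_
    simpa only [ProbabilityMeasure.coe_mk, (hmap f).1, (hmap f).2] using h f

theorem measurable_apply_randomIndex {Ω ι β : Type*} [MeasurableSpace Ω] [MeasurableSpace ι]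
    [Countable ι] [MeasurableSingletonClass ι] [MeasurableSpace β] {Y : ι → Ω → β}
    (hY : ∀ i, Measurable (Y i)) {N : Ω → ι} (hN : Measurable N) :
    Measurable fun x ↦ Y (N x) x :=
  (measurable_from_prod_countable_left (f := fun p : Ω × ι ↦ Y p.2 p.1) hY).comp
    (measurable_id.prodMk hN)

lemma abs_sub_le_mul_of_abs_div_sub_one_le {a b c : ℝ} (hb : 0 < b) (h : |a / b - 1| ≤ c) :
    |a - b| ≤ c * b := by
  have hab : a - b = (a / b - 1) * b := by field_simp
  rw [hab, abs_mul, abs_of_pos hb]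
  exact mul_le_mul_of_nonneg_right h hb.le

theorem UCIP.tendstoInMeasure_randomIndex_sub {Ω ι : Type*} [MeasurableSpace Ω] {P : Measure Ω}
    {Y : ℕ → Ω → ℝ} (hY : UCIP P Y) {l : Filter ι} {n : ι → ℕ} {N : ι → Ω → ℕ}
    (hpos : ∀ i, 0 < n i) (hn : Tendsto n l atTop)
    (hN : TendstoInMeasure P (fun i x ↦ (N i x : ℝ) / n i) l 1) :
    TendstoInMeasure P (fun i x ↦ Y (N i x) x - Y (n i) x) l 0 := by
  rw [tendstoInMeasure_iff_dist] at hN ⊢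
  intro ε hε
  refine ENNReal.tendsto_nhds_zero.mpr fun η hη ↦ ?_
  obtain ⟨r, -, hr, hrη⟩ := ENNReal.lt_iff_exists_real_btwn.mp hη
  -- `δ ≤ ε` puts the bad event inside the u.c.i.p. event, `2δ ≤ r` makes the two bounds fit in `η`
  set δ := min ε (r / 2)
  have hδ : 0 < δ := lt_min hε (half_pos (ENNReal.ofReal_pos.mp hr))
  obtain ⟨ν, hν, n₀, hucip⟩ := hY δ hδ
  have hratio := (hN ν hν.1).eventually_lt_const (ENNReal.ofReal_pos.mpr hδ)
  filter_upwards [hn.eventually_ge_atTop n₀, hratio] with i hi hri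
  have hsub : {x | ε ≤ dist (Y (N i x) x - Y (n i) x) 0} ⊆
      {x | ν ≤ dist ((N i x : ℝ) / n i) 1} ∪
        {x | ∃ n' : ℕ, |(n' : ℝ) - n i| ≤ ν * n i ∧ δ ≤ |Y n' x - Y (n i) x|} := by
    intro x hx
    refine or_iff_not_imp_left.mpr fun hclose ↦ ⟨N i x, ?_, ?_⟩
    · rw [Set.mem_ofPred_eq, Real.dist_eq, not_le] at hclose
      exact abs_sub_le_mul_of_abs_div_sub_one_le (Nat.cast_pos.mpr (hpos i)) hclose.le
    · rw [Set.mem_ofPred_eq, dist_zero_right, Real.norm_eq_abs] at hx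
      exact (min_le_left _ _).trans hx
  calc P {x | ε ≤ dist (Y (N i x) x - Y (n i) x) 0}
      ≤ P {x | ν ≤ dist ((N i x : ℝ) / n i) 1} +
        P {x | ∃ n' : ℕ, |(n' : ℝ) - n i| ≤ ν * n i ∧ δ ≤ |Y n' x - Y (n i) x|} :=
        (measure_mono hsub).trans (measure_union_le _ _)
    _ ≤ ENNReal.ofReal δ + ENNReal.ofReal δ := add_le_add hri.le (hucip _ hi).le
    _ ≤ ENNReal.ofReal r := by
        rw [← ENNReal.ofReal_add hδ.le hδ.le]
        exact ENNReal.ofReal_le_ofReal (by linarith [min_le_right ε (r / 2)])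
    _ ≤ η := hrη.le

theorem anscombe_random_clt_general {Ω : Type*} [MeasurableSpace Ω]
    (P : Measure Ω) [IsProbabilityMeasure P]
    (Y : ℕ → Ω → ℝ) (hYmeas : ∀ n, Measurable (Y n)) (hY : UCIP P Y)
    (σ : NNReal)
    (hconv : ∀ f : BoundedContinuousFunction ℝ ℝ,
      Tendsto (fun n => ∫ x, f (Y n x) ∂P) atTop
        (𝓝 (∫ y, f y ∂(gaussianReal 0 (σ ^ 2)))))
    (n : ℕ → ℕ) (hpos : ∀ k, 0 < n k) (hn : Tendsto n atTop atTop)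
    (N : ℕ → Ω → ℕ) (hNmeas : ∀ k, Measurable (N k))
    (hN : ∀ ε : ℝ, 0 < ε →
      Tendsto (fun k => P {x | ε ≤ |(N k x : ℝ) / (n k : ℝ) - 1|}) atTop (𝓝 0)) :
    ∀ f : BoundedContinuousFunction ℝ ℝ,
      Tendsto (fun k => ∫ x, f (Y (N k x) x) ∂P) atTop
        (𝓝 (∫ y, f y ∂(gaussianReal 0 (σ ^ 2)))) := by
  have hYN : ∀ k, AEMeasurable (fun x ↦ Y (N k x) x) P := fun k ↦
    (measurable_apply_randomIndex hYmeas (hNmeas k)).aemeasurable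
  have hYn : TendstoInDistribution (fun k ↦ Y (n k)) atTop id (fun _ ↦ P)
      (gaussianReal 0 (σ ^ 2)) :=
    (tendstoInDistribution_iff_forall_integral_tendsto (fun k ↦ (hYmeas _).aemeasurable)
      aemeasurable_id).mpr fun f ↦ (hconv f).comp hn
  have hratio : TendstoInMeasure P (fun k x ↦ (N k x : ℝ) / n k) atTop 1 :=
    tendstoInMeasure_iff_dist.mpr (by simpa only [Real.dist_eq, Pi.one_apply] using hN)
  have hrandom := tendstoInDistribution_of_tendstoInMeasure_sub _ _ hYn
    (hY.tendstoInMeasure_randomIndex_sub hpos hn hratio) hYN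
  exact (tendstoInDistribution_iff_forall_integral_tendsto hYN aemeasurable_id).mp hrandom

/-- Anscombe's random central limit theorem: if `(Y_n)` satisfies the u.c.i.p.
condition and converges in distribution (weak convergence of laws, expressed via
integrals of bounded continuous functions) to `N(0, σ²)` with `σ > 0`, and `N_k`
are random indices with `N_k / n_k → 1` in probability where `n_k → ∞`, then
`Y_{N_k}` converges in distribution to `N(0, σ²)`. -/
theorem anscombe_random_clt {Ω : Type*} [MeasurableSpace Ω]
    (P : Measure Ω) [IsProbabilityMeasure P]
    (Y : ℕ → Ω → ℝ) (hYmeas : ∀ n, Measurable (Y n)) (hY : UCIP P Y)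
    (σ : NNReal) (hσ : 0 < σ)
    (hconv : ∀ f : BoundedContinuousFunction ℝ ℝ,
      Tendsto (fun n => ∫ x, f (Y n x) ∂P) atTop
        (𝓝 (∫ y, f y ∂(gaussianReal 0 (σ ^ 2)))))
    (n : ℕ → ℕ) (hpos : ∀ k, 0 < n k) (hn : Tendsto n atTop atTop)
    (N : ℕ → Ω → ℕ) (hNmeas : ∀ k, Measurable (N k))
    (hN : ∀ ε : ℝ, 0 < ε →
      Tendsto (fun k => P {x | ε ≤ |(N k x : ℝ) / (n k : ℝ) - 1|}) atTop (𝓝 0)) :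
    ∀ f : BoundedContinuousFunction ℝ ℝ,
      Tendsto (fun k => ∫ x, f (Y (N k x) x) ∂P) atTop
        (𝓝 (∫ y, f y ∂(gaussianReal 0 (σ ^ 2)))) :=
  anscombe_random_clt_general P Y hYmeas hY σ hconv n hpos hn N hNmeas hN
end

section
/- Let (Ω, 𝒜, P) be a probability space, ξ² > 0, and let (V_n²)_{n≥1} be measurable functions V_n² : Ω → [0,∞) with V_n² → ξ² almost surely. Let a > 0, δ > 0, and let m : (0,∞) → ℕ satisfy m(ω) ≥ 1 and ω² m(ω) → 0 as ω → 0⁺. For each ω > 0 define the purely sequential stopping variable N_ω(x) = inf{ n ∈ ℕ : n ≥ m(ω) and n ≥ (a/ω²)( V_n²(x) + n^{−δ} ) } and the optimal size C_ω = a ξ² / ω². Then for P-almost every x ∈ Ω, N_ω(x)/C_ω → 1 as ω → 0⁺. -/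
/-!
Write `N = stopIndex A δ m v` and `w n = v n + n^{-δ}`. Since `N` satisfies the stopping rule,
`A v_N ≤ N`; since `N - 1` does not, `N ≤ max m (A w_{N-1} + 1)`. Dividing by `A ξ`, the ratio
`N / (A ξ)` is squeezed between `v_N / ξ` and `max (m / (A ξ)) ((w_{N-1} + A⁻¹) / ξ)`. As `A → ∞`
the rule forces `N^{1+δ} ≥ A`, so `N → ∞` and both bounds tend to `1`, provided `m = o(A)`.
-/

open MeasureTheory Filter Topology

/-- The set defining the stopping rule: integers `n ≥ m` with
`n ≥ A (v_n + n^{−δ})`. -/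
def stopSet (A δ : ℝ) (m : ℕ) (v : ℕ → ℝ) : Set ℕ :=
  {n : ℕ | m ≤ n ∧ A * (v n + (n : ℝ) ^ (-δ)) ≤ (n : ℝ)}

/-- The stopping index `N = inf{ n ∈ ℕ : n ≥ m and n ≥ A (v_n + n^{−δ}) }`. -/
noncomputable def stopIndex (A δ : ℝ) (m : ℕ) (v : ℕ → ℝ) : ℕ :=
  sInf (stopSet A δ m v)

section StoppingRule

variable {A δ : ℝ} {m : ℕ} {v : ℕ → ℝ}

theorem tendsto_add_rpow_neg {ξ : ℝ} (hv : Tendsto v atTop (𝓝 ξ)) (hδ : 0 < δ) :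
    Tendsto (fun n : ℕ => v n + (n : ℝ) ^ (-δ)) atTop (𝓝 ξ) := by
  simpa using hv.add ((tendsto_rpow_neg_atTop hδ).comp tendsto_natCast_atTop_atTop)

theorem stopSet_nonempty {B : ℝ} (hA : 0 ≤ A)
    (hw : ∀ᶠ n : ℕ in atTop, v n + (n : ℝ) ^ (-δ) ≤ B) : (stopSet A δ m v).Nonempty := by
  obtain ⟨n, hn⟩ := (hw.and (eventually_ge_atTop (max m ⌈A * B⌉₊))).exists
  refine ⟨n, le_of_max_le_left hn.2, ?_⟩
  calc A * (v n + (n : ℝ) ^ (-δ)) ≤ A * B := mul_le_mul_of_nonneg_left hn.1 hA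
    _ ≤ ⌈A * B⌉₊ := Nat.le_ceil _
    _ ≤ n := by exact_mod_cast le_of_max_le_right hn.2

theorem stopIndex_mem (hS : (stopSet A δ m v).Nonempty) :
    stopIndex A δ m v ∈ stopSet A δ m v :=
  Nat.sInf_mem hS

theorem mul_le_stopIndex (hA : 0 ≤ A) (hS : (stopSet A δ m v).Nonempty) :
    A * v (stopIndex A δ m v) ≤ stopIndex A δ m v := by
  have hN := (stopIndex_mem hS).2
  have : 0 ≤ A * (stopIndex A δ m v : ℝ) ^ (-δ) := by positivity
  linarith [mul_add A (v (stopIndex A δ m v)) ((stopIndex A δ m v : ℝ) ^ (-δ))]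

theorem rpow_inv_le_stopIndex (hv : ∀ n, 0 ≤ v n) (hA : 0 ≤ A) (hδ : 0 ≤ δ) (hm : 1 ≤ m)
    (hS : (stopSet A δ m v).Nonempty) :
    A ^ (1 + δ)⁻¹ ≤ stopIndex A δ m v := by
  set N := stopIndex A δ m v
  obtain ⟨hmN, hN⟩ := stopIndex_mem hS
  have hNpos : (0 : ℝ) < N := by exact_mod_cast hm.trans hmN
  have hrule : A * (N : ℝ) ^ (-δ) ≤ N := by
    nlinarith [mul_nonneg hA (hv N), Real.rpow_nonneg hNpos.le (-δ)]
  rw [Real.rpow_inv_le_iff_of_pos hA hNpos.le (by linarith), Real.rpow_add hNpos, Real.rpow_one]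
  rw [Real.rpow_neg hNpos.le, ← div_eq_mul_inv,
    div_le_iff₀ (Real.rpow_pos_of_pos hNpos δ)] at hrule
  exact hrule

theorem stopIndex_le_max :
    (stopIndex A δ m v : ℝ) ≤
      max (m : ℝ) (A * (v (stopIndex A δ m v - 1) +
        ((stopIndex A δ m v - 1 : ℕ) : ℝ) ^ (-δ)) + 1) := by
  set N := stopIndex A δ m v
  by_cases hNm : N ≤ m
  · exact le_max_of_le_left (by exact_mod_cast hNm)
  · have hprev : N - 1 ∉ stopSet A δ m v :=
      Nat.notMem_of_lt_sInf (show N - 1 < N by omega)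
    have hmprev : m ≤ N - 1 := by omega
    have hcast : ((N - 1 : ℕ) : ℝ) = N - 1 := by
      rw [Nat.cast_sub (by omega), Nat.cast_one]
    simp only [stopSet, Set.mem_ofPred_eq, not_and, not_le] at hprev
    have := hprev hmprev
    exact le_max_of_le_right (by linarith)

end StoppingRule

section Asymptotics

variable {ι : Type*} {l : Filter ι} {A : ι → ℝ} {m : ι → ℕ} {δ ξ : ℝ} {v : ℕ → ℝ}

theorem tendsto_stopIndex_atTop (hv0 : ∀ n, 0 ≤ v n) (hv : Tendsto v atTop (𝓝 ξ)) (hδ : 0 < δ)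
    (hm : ∀ i, 1 ≤ m i) (hA : Tendsto A l atTop) :
    Tendsto (fun i => stopIndex (A i) δ (m i) v) l atTop := by
  have hw := (tendsto_add_rpow_neg hv hδ).eventually (eventually_le_nhds (lt_add_one ξ))
  rw [← tendsto_natCast_atTop_iff (R := ℝ)]
  refine tendsto_atTop_mono' l ?_ ((tendsto_rpow_atTop (y := (1 + δ)⁻¹) (by positivity)).comp hA)
  filter_upwards [hA.eventually_ge_atTop 0] with i hAi
  exact rpow_inv_le_stopIndex hv0 hAi hδ.le (hm i) (stopSet_nonempty hAi hw)

theorem tendsto_stopIndex_div (hξ : 0 < ξ) (hv0 : ∀ n, 0 ≤ v n) (hv : Tendsto v atTop (𝓝 ξ))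
    (hδ : 0 < δ) (hm : ∀ i, 1 ≤ m i) (hA : Tendsto A l atTop)
    (hmA : Tendsto (fun i => (m i : ℝ) / A i) l (𝓝 0)) :
    Tendsto (fun i => (stopIndex (A i) δ (m i) v : ℝ) / (A i * ξ)) l (𝓝 1) := by
  set N := fun i => stopIndex (A i) δ (m i) v
  have hw := tendsto_add_rpow_neg hv hδ
  have hN := tendsto_stopIndex_atTop hv0 hv hδ hm hA
  have hlower : Tendsto (fun i => v (N i) / ξ) l (𝓝 1) := by
    simpa [hξ.ne'] using (hv.comp hN).div_const ξ
  have hupper : Tendsto (fun i => max (m i / A i / ξ)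
      ((v (N i - 1) + ((N i - 1 : ℕ) : ℝ) ^ (-δ) + (A i)⁻¹) / ξ)) l (𝓝 1) := by
    have hprev := hw.comp ((tendsto_sub_atTop_nat 1).comp hN)
    have := (hmA.div_const ξ).max ((hprev.add (tendsto_inv_atTop_zero.comp hA)).div_const ξ)
    simpa [hξ.ne'] using this
  refine tendsto_of_tendsto_of_tendsto_of_le_of_le' hlower hupper ?_ ?_
  all_goals filter_upwards [hA.eventually_gt_atTop 0] with i hAi
  · have hAv := mul_le_stopIndex (m := m i) hAi.le
      (stopSet_nonempty hAi.le (hw.eventually (eventually_le_nhds (lt_add_one ξ))))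
    rw [div_le_div_iff₀ hξ (by positivity)]
    linarith [mul_le_mul_of_nonneg_right hAv hξ.le]
  · rw [max_div_div_right hξ.le, ← div_div, div_le_div_iff_of_pos_right hξ]
    refine (div_le_div_of_nonneg_right stopIndex_le_max hAi.le).trans_eq ?_
    rw [← max_div_div_right hAi.le, add_div, mul_div_cancel_left₀ _ hAi.ne', one_div]

end Asymptotics

theorem purely_sequential_ratio_tendsto_ae_general {Ω : Type*} [MeasurableSpace Ω]
    (P : Measure Ω)
    (ξsq : ℝ) (hξ : 0 < ξsq)
    (V : ℕ → Ω → ℝ) (hVnonneg : ∀ n x, 0 ≤ V n x)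
    (hVconv : ∀ᵐ x ∂P, Tendsto (fun n => V n x) atTop (𝓝 ξsq))
    (a δ : ℝ) (ha : 0 < a) (hδ : 0 < δ)
    (m : ℝ → ℕ) (hm : ∀ ω, 1 ≤ m ω)
    (hm0 : Tendsto (fun ω : ℝ => ω ^ 2 * (m ω : ℝ)) (𝓝[>] 0) (𝓝 0)) :
    ∀ᵐ x ∂P, Tendsto
      (fun ω : ℝ => (stopIndex (a / ω ^ 2) δ (m ω) (fun n => V n x) : ℝ) /
        (a * ξsq / ω ^ 2))
      (𝓝[>] 0) (𝓝 1) := by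
  have hA : Tendsto (fun ω : ℝ => a / ω ^ 2) (𝓝[>] 0) atTop := by
    simpa [div_eq_mul_inv] using
      ((tendsto_pow_atTop two_ne_zero).comp tendsto_inv_nhdsGT_zero).const_mul_atTop ha
  have hmA : Tendsto (fun ω : ℝ => (m ω : ℝ) / (a / ω ^ 2)) (𝓝[>] 0) (𝓝 0) := by
    simpa [div_div_eq_mul_div, mul_comm] using hm0.div_const a
  filter_upwards [hVconv] with x hx
  simpa [div_mul_eq_mul_div] using
    tendsto_stopIndex_div hξ (hVnonneg · x) hx hδ hm hA hmA

/-- Almost-sure first-order efficiency of the purely sequential procedure: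
if `V_n² → ξ²` almost surely, then for `P`-almost every `x`, the stopping
variable `N_ω(x) = inf{ n : n ≥ m(ω), n ≥ (a/ω²)(V_n²(x) + n^{−δ}) }` satisfies
`N_ω(x)/C_ω → 1` as `ω → 0⁺`, where `C_ω = a ξ²/ω²`. -/
theorem purely_sequential_ratio_tendsto_ae {Ω : Type*} [MeasurableSpace Ω]
    (P : Measure Ω) [IsProbabilityMeasure P]
    (ξsq : ℝ) (hξ : 0 < ξsq)
    (V : ℕ → Ω → ℝ) (hVmeas : ∀ n, Measurable (V n)) (hVnonneg : ∀ n x, 0 ≤ V n x)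
    (hVconv : ∀ᵐ x ∂P, Tendsto (fun n => V n x) atTop (𝓝 ξsq))
    (a δ : ℝ) (ha : 0 < a) (hδ : 0 < δ)
    (m : ℝ → ℕ) (hm : ∀ ω, 1 ≤ m ω)
    (hm0 : Tendsto (fun ω : ℝ => ω ^ 2 * (m ω : ℝ)) (𝓝[>] 0) (𝓝 0)) :
    ∀ᵐ x ∂P, Tendsto
      (fun ω : ℝ => (stopIndex (a / ω ^ 2) δ (m ω) (fun n => V n x) : ℝ) /
        (a * ξsq / ω ^ 2))
      (𝓝[>] 0) (𝓝 1) :=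
  purely_sequential_ratio_tendsto_ae_general P ξsq hξ V hVnonneg hVconv a δ ha hδ m hm hm0
end
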